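/- Let p₁,p₂,p₃ ∈ ℝ⁷ with |p₁| ≤ 1, |p₂| ≤ 1, |p₃| ≤ 1, and suppose c(p₁,p₂) ≠ 0, c(p₂,p₃) ≠ 0, c(p₁⊛p₂,p₃) ≠ 0 and c(p₁,p₂⊛p₃) ≠ 0. Then the associator of the vector star product equals (p₁⊛p₂)⊛p₃ − p₁⊛(p₂⊛p₃) = ε(p₁,p₂)·ε(p₁⊛p₂,p₃)·[ (p₁×p₂)×p₃ − (p₁·p₂) p₃ − p₁×(p₂×p₃) + (p₂·p₃) p₁ ]. -/

import Mathlib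

open Finset

/-- The 0-indexed positive triples of the 7-dimensional epsilon tensor,
corresponding to the 1-indexed triples (1,2,3), (1,4,5), (1,7,6), (2,4,6),
(2,5,7), (3,4,7), (3,6,5). -/
def octTriples : List (Fin 7 × Fin 7 × Fin 7) :=
  [(0, 1, 2), (0, 3, 4), (0, 6, 5), (1, 3, 5), (1, 4, 6), (2, 3, 6), (2, 5, 4)]

/-- The totally antisymmetric tensor `ε` on triples of indices in `Fin 7`:
`+1` on the listed triples and their cyclic permutations, `-1` on the odd
permutations thereof, and `0` otherwise. -/
def eps (i j k : Fin 7) : ℝ :=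
  if (i, j, k) ∈ octTriples ∨ (j, k, i) ∈ octTriples ∨ (k, i, j) ∈ octTriples then 1
  else if (j, i, k) ∈ octTriples ∨ (i, k, j) ∈ octTriples ∨ (k, j, i) ∈ octTriples then -1
  else 0

/-- The Levi-Civita symbol in seven dimensions: the sign of the permutation
`(a 0, …, a 6)` of `(0, …, 6)`, and `0` if the indices are not distinct.
In particular `eps7 ![0,1,2,3,4,5,6] = 1`. -/
noncomputable def eps7 (a : Fin 7 → Fin 7) : ℝ :=
  if h : Function.Bijective a then ((Equiv.Perm.sign (Equiv.ofBijective a h) : ℤ) : ℝ) else 0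

/-- The rank-four tensor `ε4_{ijlm} = (1/6) Σ_{k,p,r} ε7_{ijlmkpr} ε_{kpr}`. -/
noncomputable def eps4 (i j l m : Fin 7) : ℝ :=
  (1 / 6) * ∑ k : Fin 7, ∑ p : Fin 7, ∑ r : Fin 7, eps7 ![i, j, l, m, k, p, r] * eps k p r

/-- The Euclidean dot product on `ℝ⁷`. -/
def dot (u v : Fin 7 → ℝ) : ℝ := ∑ i : Fin 7, u i * v i

/-- The 7-dimensional cross product, `(u × v)_i = Σ_{j,k} ε_{ijk} u_j v_k`. -/
noncomputable def cross (u v : Fin 7 → ℝ) : Fin 7 → ℝ :=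
  fun i => ∑ j : Fin 7, ∑ k : Fin 7, eps i j k * u j * v k

/-- `c(p,q) = √(1-|p|²)·√(1-|q|²) - p·q`. -/
noncomputable def cfun (p q : Fin 7 → ℝ) : ℝ :=
  Real.sqrt (1 - dot p p) * Real.sqrt (1 - dot q q) - dot p q

/-- The sign `ε(p,q)`: `1` if `c(p,q) ≥ 0` and `-1` otherwise. -/
noncomputable def sgn (p q : Fin 7 → ℝ) : ℝ := if 0 ≤ cfun p q then 1 else -1

/-- The vector star product
`p ⊛ q = ε(p,q)·(√(1-|p|²) q + √(1-|q|²) p - p×q)`. -/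
noncomputable def vstar (p q : Fin 7 → ℝ) : Fin 7 → ℝ :=
  sgn p q • (Real.sqrt (1 - dot p p) • q + Real.sqrt (1 - dot q q) • p - cross p q)

/-!
Put `a = √(1 - |p|²)`: the map `p ↦ (a, p)` identifies the unit ball of `ℝ⁷` with the upper half
of the unit sphere of the octonions `ℝ × ℝ⁷`, and `p ⊛ q` is, up to the sign `ε(p,q)`, the
imaginary part of the octonion product `(a, p) (b, q)`, whose real part is `c(p,q)`. As octonion
multiplication preserves the norm, the lift of `p ⊛ q` is `ε(p,q) (a, p) (b, q)`. Hence the two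
sides of the associator are the imaginary parts of `±(x y) z` and `±x (y z)`. The signs agree
because the real part of a product of three octonions does not depend on the bracketing, and
the difference of the imaginary parts is the stated expression by bilinearity alone.
-/

lemma cross_eq (u v : Fin 7 → ℝ) : cross u v = ![
    u 1 * v 2 - u 2 * v 1 + u 3 * v 4 - u 4 * v 3 + u 6 * v 5 - u 5 * v 6,
    u 2 * v 0 - u 0 * v 2 + u 3 * v 5 - u 5 * v 3 + u 4 * v 6 - u 6 * v 4,
    u 0 * v 1 - u 1 * v 0 + u 3 * v 6 - u 6 * v 3 + u 5 * v 4 - u 4 * v 5,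
    u 4 * v 0 - u 0 * v 4 + u 5 * v 1 - u 1 * v 5 + u 6 * v 2 - u 2 * v 6,
    u 0 * v 3 - u 3 * v 0 + u 6 * v 1 - u 1 * v 6 + u 2 * v 5 - u 5 * v 2,
    u 0 * v 6 - u 6 * v 0 + u 1 * v 3 - u 3 * v 1 + u 4 * v 2 - u 2 * v 4,
    u 5 * v 0 - u 0 * v 5 + u 1 * v 4 - u 4 * v 1 + u 2 * v 3 - u 3 * v 2] := by
  funext i
  fin_cases i <;>
  · simp only [cross, Fin.sum_univ_seven]
    simp +decide only [eps, if_true, if_false]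
    simp
    ring

lemma cross_add_left (u v w : Fin 7 → ℝ) : cross (u + v) w = cross u w + cross v w := by
  funext i; simp [cross, add_mul, mul_add, Finset.sum_add_distrib]

lemma cross_sub_left (u v w : Fin 7 → ℝ) : cross (u - v) w = cross u w - cross v w := by
  funext i; simp [cross, sub_mul, mul_sub, Finset.sum_sub_distrib]

lemma cross_smul_left (s : ℝ) (u v : Fin 7 → ℝ) : cross (s • u) v = s • cross u v := by
  funext i
  simp only [cross, Pi.smul_apply, smul_eq_mul, Finset.mul_sum]
  exact Finset.sum_congr rfl fun j _ => Finset.sum_congr rfl fun k _ => by ring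

lemma cross_add_right (u v w : Fin 7 → ℝ) : cross u (v + w) = cross u v + cross u w := by
  funext i; simp [cross, mul_add, Finset.sum_add_distrib]

lemma cross_sub_right (u v w : Fin 7 → ℝ) : cross u (v - w) = cross u v - cross u w := by
  funext i; simp [cross, mul_sub, Finset.sum_sub_distrib]

lemma cross_smul_right (s : ℝ) (u v : Fin 7 → ℝ) : cross u (s • v) = s • cross u v := by
  funext i
  simp only [cross, Pi.smul_apply, smul_eq_mul, Finset.mul_sum]
  exact Finset.sum_congr rfl fun j _ => Finset.sum_congr rfl fun k _ => by ring

lemma dot_eq_dotProduct (u v : Fin 7 → ℝ) : dot u v = u ⬝ᵥ v := rfl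

lemma dot_cross (u v w : Fin 7 → ℝ) : dot (cross u v) w = dot u (cross v w) := by
  simp only [dot, Fin.sum_univ_seven, cross_eq]
  simp
  ring

/-- Octonion multiplication on pairs (real part, imaginary part), for the orientation of the
cross product opposite to `cross`. -/
noncomputable def octMul (x y : ℝ × (Fin 7 → ℝ)) : ℝ × (Fin 7 → ℝ) :=
  (x.1 * y.1 - dot x.2 y.2, x.1 • y.2 + y.1 • x.2 - cross x.2 y.2)

lemma octMul_smul_left (s : ℝ) (x y : ℝ × (Fin 7 → ℝ)) :
    octMul (s • x) y = s • octMul x y := by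
  refine Prod.ext ?_ ?_
  · simp only [octMul, Prod.smul_fst, Prod.smul_snd, smul_eq_mul, dot_eq_dotProduct,
      smul_dotProduct]
    ring
  · simp only [octMul, Prod.smul_fst, Prod.smul_snd, cross_smul_left]
    module

lemma octMul_smul_right (s : ℝ) (x y : ℝ × (Fin 7 → ℝ)) :
    octMul x (s • y) = s • octMul x y := by
  refine Prod.ext ?_ ?_
  · simp only [octMul, Prod.smul_fst, Prod.smul_snd, smul_eq_mul, dot_eq_dotProduct,
      dotProduct_smul]
    ring
  · simp only [octMul, Prod.smul_fst, Prod.smul_snd, cross_smul_right]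
    module

lemma octMul_normSq (x y : ℝ × (Fin 7 → ℝ)) :
    (octMul x y).1 ^ 2 + dot (octMul x y).2 (octMul x y).2 =
      (x.1 ^ 2 + dot x.2 x.2) * (y.1 ^ 2 + dot y.2 y.2) := by
  simp only [octMul, dot, Fin.sum_univ_seven, cross_eq]
  simp
  ring

lemma octMul_fst_assoc (x y z : ℝ × (Fin 7 → ℝ)) :
    (octMul (octMul x y) z).1 = (octMul x (octMul y z)).1 := by
  have h := dot_cross x.2 y.2 z.2
  simp only [octMul, dot_eq_dotProduct, add_dotProduct, sub_dotProduct, dotProduct_add,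
    dotProduct_sub, smul_dotProduct, dotProduct_smul, smul_eq_mul] at h ⊢
  linear_combination h

lemma octMul_snd_associator (x y z : ℝ × (Fin 7 → ℝ)) :
    (octMul (octMul x y) z).2 - (octMul x (octMul y z)).2 =
      cross (cross x.2 y.2) z.2 - dot x.2 y.2 • z.2 - cross x.2 (cross y.2 z.2) +
        dot y.2 z.2 • x.2 := by
  simp only [octMul, cross_sub_left, cross_add_left, cross_smul_left, cross_sub_right,
    cross_add_right, cross_smul_right]
  module

noncomputable def unitLift (p : Fin 7 → ℝ) : ℝ × (Fin 7 → ℝ) := (Real.sqrt (1 - dot p p), p)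

lemma unitLift_normSq {p : Fin 7 → ℝ} (hp : dot p p ≤ 1) :
    (unitLift p).1 ^ 2 + dot (unitLift p).2 (unitLift p).2 = 1 := by
  rw [unitLift, Real.sq_sqrt (by linarith)]
  ring

lemma cfun_eq_octMul_fst (p q : Fin 7 → ℝ) : cfun p q = (octMul (unitLift p) (unitLift q)).1 :=
  rfl

lemma vstar_eq_smul_octMul_snd (p q : Fin 7 → ℝ) :
    vstar p q = sgn p q • (octMul (unitLift p) (unitLift q)).2 :=
  rfl

lemma sgn_mul_self (p q : Fin 7 → ℝ) : sgn p q * sgn p q = 1 := by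
  unfold sgn; split_ifs <;> norm_num

lemma sgn_mul_cfun (p q : Fin 7 → ℝ) : sgn p q * cfun p q = |cfun p q| := by
  unfold sgn
  split_ifs with h
  · rw [one_mul, abs_of_nonneg h]
  · rw [abs_of_neg (not_le.mp h), neg_one_mul]

lemma sgn_eq_sign {p q : Fin 7 → ℝ} (h : cfun p q ≠ 0) : sgn p q = Real.sign (cfun p q) := by
  unfold sgn
  split_ifs with h'
  · rw [Real.sign_of_pos (lt_of_le_of_ne h' h.symm)]
  · rw [Real.sign_of_neg (not_le.mp h')]

lemma dot_self_vstar {p q : Fin 7 → ℝ} (hp : dot p p ≤ 1) (hq : dot q q ≤ 1) :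
    dot (vstar p q) (vstar p q) = 1 - cfun p q ^ 2 := by
  have h := octMul_normSq (unitLift p) (unitLift q)
  rw [unitLift_normSq hp, unitLift_normSq hq, ← cfun_eq_octMul_fst] at h
  rw [vstar_eq_smul_octMul_snd, dot_eq_dotProduct, smul_dotProduct, dotProduct_smul, smul_eq_mul,
    smul_eq_mul, ← mul_assoc, sgn_mul_self, one_mul, ← dot_eq_dotProduct]
  linarith

lemma dot_self_vstar_le {p q : Fin 7 → ℝ} (hp : dot p p ≤ 1) (hq : dot q q ≤ 1) :
    dot (vstar p q) (vstar p q) ≤ 1 := by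
  rw [dot_self_vstar hp hq]
  nlinarith [sq_nonneg (cfun p q)]

lemma unitLift_vstar {p q : Fin 7 → ℝ} (hp : dot p p ≤ 1) (hq : dot q q ≤ 1) :
    unitLift (vstar p q) = sgn p q • octMul (unitLift p) (unitLift q) := by
  refine Prod.ext ?_ rfl
  rw [Prod.smul_fst, smul_eq_mul, ← cfun_eq_octMul_fst, sgn_mul_cfun, unitLift,
    dot_self_vstar hp hq, sub_sub_cancel, Real.sqrt_sq_eq_abs]

lemma cfun_vstar_left {p q : Fin 7 → ℝ} (hp : dot p p ≤ 1) (hq : dot q q ≤ 1) (r : Fin 7 → ℝ) :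
    cfun (vstar p q) r = sgn p q * (octMul (octMul (unitLift p) (unitLift q)) (unitLift r)).1 := by
  rw [cfun_eq_octMul_fst, unitLift_vstar hp hq, octMul_smul_left, Prod.smul_fst, smul_eq_mul]

lemma cfun_vstar_right (p : Fin 7 → ℝ) {q r : Fin 7 → ℝ} (hq : dot q q ≤ 1) (hr : dot r r ≤ 1) :
    cfun p (vstar q r) = sgn q r * (octMul (unitLift p) (octMul (unitLift q) (unitLift r))).1 := by
  rw [cfun_eq_octMul_fst, unitLift_vstar hq hr, octMul_smul_right, Prod.smul_fst, smul_eq_mul]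

lemma vstar_vstar_left {p q : Fin 7 → ℝ} (hp : dot p p ≤ 1) (hq : dot q q ≤ 1) (r : Fin 7 → ℝ) :
    vstar (vstar p q) r = (sgn p q * sgn (vstar p q) r) •
      (octMul (octMul (unitLift p) (unitLift q)) (unitLift r)).2 := by
  rw [vstar_eq_smul_octMul_snd, unitLift_vstar hp hq, octMul_smul_left, Prod.smul_snd, smul_smul,
    mul_comm]

lemma vstar_vstar_right (p : Fin 7 → ℝ) {q r : Fin 7 → ℝ} (hq : dot q q ≤ 1) (hr : dot r r ≤ 1) :
    vstar p (vstar q r) = (sgn q r * sgn p (vstar q r)) •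
      (octMul (unitLift p) (octMul (unitLift q) (unitLift r))).2 := by
  rw [vstar_eq_smul_octMul_snd, unitLift_vstar hq hr, octMul_smul_right, Prod.smul_snd, smul_smul,
    mul_comm]

lemma mul_sign_mul_of_mul_self_eq_one {s : ℝ} (hs : s * s = 1) (x : ℝ) :
    s * Real.sign (s * x) = Real.sign x := by
  rcases mul_self_eq_one_iff.mp hs with rfl | rfl
  · rw [one_mul, one_mul]
  · rw [neg_one_mul, neg_one_mul, Real.sign_neg, neg_neg]

lemma sgn_mul_sgn_vstar_left {p q r : Fin 7 → ℝ} (hp : dot p p ≤ 1) (hq : dot q q ≤ 1)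
    (hc : cfun (vstar p q) r ≠ 0) :
    sgn p q * sgn (vstar p q) r =
      Real.sign (octMul (octMul (unitLift p) (unitLift q)) (unitLift r)).1 := by
  rw [sgn_eq_sign hc, cfun_vstar_left hp hq, mul_sign_mul_of_mul_self_eq_one (sgn_mul_self p q)]

lemma sgn_mul_sgn_vstar_right {p q r : Fin 7 → ℝ} (hq : dot q q ≤ 1) (hr : dot r r ≤ 1)
    (hc : cfun p (vstar q r) ≠ 0) :
    sgn q r * sgn p (vstar q r) =
      Real.sign (octMul (unitLift p) (octMul (unitLift q) (unitLift r))).1 := by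
  rw [sgn_eq_sign hc, cfun_vstar_right p hq hr,
    mul_sign_mul_of_mul_self_eq_one (sgn_mul_self q r)]

theorem vstar_associator_general (p₁ p₂ p₃ : Fin 7 → ℝ)
    (h₁ : dot p₁ p₁ ≤ 1) (h₂ : dot p₂ p₂ ≤ 1) (h₃ : dot p₃ p₃ ≤ 1)
    (hcL : cfun (vstar p₁ p₂) p₃ ≠ 0) :
    vstar (vstar p₁ p₂) p₃ - vstar p₁ (vstar p₂ p₃) =
      (sgn p₁ p₂ * sgn (vstar p₁ p₂) p₃) •
        (cross (cross p₁ p₂) p₃ - dot p₁ p₂ • p₃ -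
          cross p₁ (cross p₂ p₃) + dot p₂ p₃ • p₁) := by
  have hfst := octMul_fst_assoc (unitLift p₁) (unitLift p₂) (unitLift p₃)
  have hcR : cfun p₁ (vstar p₂ p₃) ≠ 0 := by
    rw [cfun_vstar_left h₁ h₂] at hcL
    rw [cfun_vstar_right p₁ h₂ h₃, ← hfst]
    exact mul_ne_zero (left_ne_zero_of_mul_eq_one (sgn_mul_self p₂ p₃)) (right_ne_zero_of_mul hcL)
  have hsgn : sgn p₂ p₃ * sgn p₁ (vstar p₂ p₃) = sgn p₁ p₂ * sgn (vstar p₁ p₂) p₃ := by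
    rw [sgn_mul_sgn_vstar_left h₁ h₂ hcL, sgn_mul_sgn_vstar_right h₂ h₃ hcR, hfst]
  rw [vstar_vstar_left h₁ h₂, vstar_vstar_right p₁ h₂ h₃, hsgn, ← smul_sub,
    octMul_snd_associator]
  rfl

/-- the associator of the vector star product equals
`(p₁⊛p₂)⊛p₃ - p₁⊛(p₂⊛p₃)
  = ε(p₁,p₂)·ε(p₁⊛p₂,p₃)·[(p₁×p₂)×p₃ - (p₁·p₂) p₃ - p₁×(p₂×p₃) + (p₂·p₃) p₁]`. -/
theorem vstar_associator (p₁ p₂ p₃ : Fin 7 → ℝ)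
    (h₁ : dot p₁ p₁ ≤ 1) (h₂ : dot p₂ p₂ ≤ 1) (h₃ : dot p₃ p₃ ≤ 1)
    (hc₁₂ : cfun p₁ p₂ ≠ 0) (hc₂₃ : cfun p₂ p₃ ≠ 0)
    (hcL : cfun (vstar p₁ p₂) p₃ ≠ 0) (hcR : cfun p₁ (vstar p₂ p₃) ≠ 0) :
    vstar (vstar p₁ p₂) p₃ - vstar p₁ (vstar p₂ p₃) =
      (sgn p₁ p₂ * sgn (vstar p₁ p₂) p₃) •
        (cross (cross p₁ p₂) p₃ - dot p₁ p₂ • p₃ -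
          cross p₁ (cross p₂ p₃) + dot p₂ p₃ • p₁) :=
  vstar_associator_general p₁ p₂ p₃ h₁ h₂ h₃ hcL
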